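/- For every integer p ≥ 0 define a^{(p)} : ℤ → ℝ by a_k^{(p)} = (−1)^k·(k/2)·Σ_{m=0}^{p} c_m^{(p)}·(k−m−1)_{2m+3}/((m+1)(m+2)). Then for every integer k ≥ 0: (i) (2k+1)·(a_{k+1}^{(p)} − a_k^{(p)}) = (−1)^{k+1}(2k+1)·Σ_{m=0}^{p+2} c_m^{(p+2)}·(k−m+1)_{2m}; and (ii) for k ≥ 1, (a_{k+2}^{(p)}+a_{k+1}^{(p)})/(2k+3) − (a_k^{(p)}+a_{k−1}^{(p)})/(2k−1) = (−1)^k(2k+1)·Σ_{m=0}^{p} c_m^{(p)}·(k−m+1)_{2m}. -/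
import Mathlib


open Finset

/-- The Pochhammer symbol `(f)_n = f (f+1) ⋯ (f+n-1)`, with `(f)_0 = 1`. -/
noncomputable def poch (f : ℝ) (n : ℕ) : ℝ := ∏ i ∈ Finset.range n, (f + (i : ℝ))

lemma poch_zero (x : ℝ) : poch x 0 = 1 := by simp [poch]

lemma poch_succ (x : ℝ) (n : ℕ) : poch x (n+1) = poch x n * (x + n) := by
  simp [poch, Finset.prod_range_succ]

lemma poch_shift (x : ℝ) (n : ℕ) : poch x (n+1) = x * poch (x+1) n := by
  rw [poch, Finset.prod_range_succ']
  rw [mul_comm]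
  congr 1
  · norm_num
  · apply Finset.prod_congr rfl
    intro i _
    push_cast
    ring

lemma sub1 (x : ℝ) (n : ℕ) : poch (x-1) (n+1) = (x-1) * poch x n := by
  rw [poch_shift, sub_add_cancel]

lemma sub2 (x : ℝ) (n : ℕ) : poch (x-2) (n+2) = (x-2)*(x-1) * poch x n := by
  rw [show x - 2 = (x-1) - 1 by ring, show n+2 = (n+1)+1 from rfl, sub1, sub1]; ring

lemma sub3 (x : ℝ) (n : ℕ) : poch (x-3) (n+3) = (x-3)*(x-2)*(x-1) * poch x n := by
  rw [show x - 3 = (x-1) - 2 by ring, show n+3 = (n+1)+2 from rfl, sub2, sub1]; ring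

lemma upA2 (x : ℝ) (n : ℕ) : poch x (n+2) = poch x n * (x+n) * (x+n+1) := by
  rw [show n+2 = (n+1)+1 from rfl, poch_succ, poch_succ]; push_cast; ring

lemma upA3 (x : ℝ) (n : ℕ) : poch x (n+3) = poch x n * (x+n) * (x+n+1) * (x+n+2) := by
  rw [show n+3 = (n+2)+1 from rfl, poch_succ, upA2]; push_cast; ring

lemma subB2 (x : ℝ) (n : ℕ) : poch (x-1) (n+2) = (x-1) * (poch x n * (x+n)) := by
  rw [show n+2 = (n+1)+1 from rfl, sub1]; rw [poch_succ]

lemma subB3 (x : ℝ) (n : ℕ) : poch (x-1) (n+3) = (x-1) * (poch x n * (x+n) * (x+n+1)) := by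
  rw [show n+3 = (n+2)+1 from rfl, sub1]; rw [upA2]

lemma subC3 (x : ℝ) (n : ℕ) : poch (x-2) (n+3) = (x-2)*(x-1) * (poch x n * (x+n)) := by
  rw [show n+3 = (n+1)+2 from rfl, sub2]; rw [poch_succ]

lemma subC4 (x : ℝ) (n : ℕ) : poch (x-2) (n+4) = (x-2)*(x-1) * (poch x n * (x+n) * (x+n+1)) := by
  rw [show n+4 = (n+2)+2 from rfl, sub2]; rw [upA2]

lemma poch_eq_zero {x : ℝ} {n i : ℕ} (hi : i < n) (hx : x + i = 0) : poch x n = 0 :=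
  Finset.prod_eq_zero (Finset.mem_range.mpr hi) hx

/-- The coefficients `c_m^{(p)} = (2m-p+2)_{2p-2m} / (2^{2p-2m} m! (p-m)!)` for `0 ≤ m ≤ p`,
and `c_m^{(p)} = 0` for `m > p`. -/
noncomputable def cc (p m : ℕ) : ℝ :=
  if m ≤ p then
    poch (2 * (m : ℝ) - p + 2) (2 * (p - m)) /
      (2 ^ (2 * (p - m)) * (m.factorial : ℝ) * ((p - m).factorial : ℝ))
  else 0

lemma cc_of_gt {p m : ℕ} (h : p < m) : cc p m = 0 := if_neg (by omega)

lemma cc_zero (p : ℕ) : cc (p+2) 0 = 0 := by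
  rw [cc, if_pos (by omega)]
  rw [poch_eq_zero (i := p) (by omega) (by push_cast; ring)]
  simp

lemma cc_one (p : ℕ) : cc (p+2) 1 = 3/2 * cc p 0 := by
  match p with
  | 0 => norm_num [cc, poch, Finset.prod_range_succ]
  | 1 => norm_num [cc, poch, Finset.prod_range_succ]
  | (q+2) =>
    rw [cc, if_pos (by omega), cc, if_pos (by omega)]
    rw [poch_eq_zero (i := q) (by omega) (by push_cast; ring)]
    rw [poch_eq_zero (i := q) (by omega) (by push_cast; ring)]
    simp

lemma cLem (p m : ℕ) : cc (p+2) (m+2) =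
    cc p m / (((m:ℝ)+1)*((m:ℝ)+2)) + cc p (m+1) * (2*(m:ℝ)+5) / (2*((m:ℝ)+2)) := by
  have hm1 : ((m:ℝ)+1) ≠ 0 := by positivity
  have hm2 : ((m:ℝ)+2) ≠ 0 := by positivity
  have hmf : (m.factorial : ℝ) ≠ 0 := Nat.cast_ne_zero.mpr (Nat.factorial_ne_zero _)
  rcases Nat.lt_trichotomy m p with h | rfl | h
  · obtain ⟨j, rfl⟩ : ∃ j, p = m + (j+1) := ⟨p - m - 1, by omega⟩
    have hjf : (j.factorial : ℝ) ≠ 0 := Nat.cast_ne_zero.mpr (Nat.factorial_ne_zero _)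
    rw [cc, if_pos (by omega), cc, if_pos (by omega), cc, if_pos (by omega)]
    simp only [show m + (j+1) + 2 - (m+2) = j+1 from by omega,
      show m + (j+1) - m = j+1 from by omega,
      show m + (j+1) - (m+1) = j from by omega]
    rw [show (2 * ((m+2 : ℕ):ℝ) - ((m + (j + 1) + 2 : ℕ):ℝ) + 2) = ((m:ℝ) - j + 3) from by
      push_cast; ring]
    rw [show (2 * (m:ℝ) - ((m + (j + 1) : ℕ):ℝ) + 2) = ((m:ℝ) - j + 3) - 2 from by
      push_cast; ring]
    rw [show (2 * ((m+1:ℕ):ℝ) - ((m + (j + 1) : ℕ):ℝ) + 2) = ((m:ℝ) - j + 3) from by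
      push_cast; ring]
    rw [show 2*(j+1) = 2*j+2 from by omega]
    rw [upA2 ((m:ℝ) - j + 3) (2*j), sub2 ((m:ℝ) - j + 3) (2*j)]
    simp only [Nat.factorial_succ, pow_add]
    push_cast
    field_simp
    ring
  · rw [cc, if_pos (by omega), cc, if_pos (by omega), cc_of_gt (by omega)]
    simp only [Nat.sub_self, mul_zero, poch_zero, pow_zero, Nat.factorial_zero, Nat.cast_one,
      one_mul, mul_one, zero_mul, zero_div, add_zero]
    simp only [Nat.factorial_succ]
    push_cast
    field_simp
    ring
  · rw [cc_of_gt (by omega), cc_of_gt (by omega), cc_of_gt (by omega)]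
    simp

lemma keyI (k m : ℕ) :
    ((k:ℝ)+1)/2 * (poch ((k:ℝ) + 1 - ↑m - 1) (2*m+3) / ((↑m+1)*(↑m+2)))
      + (k:ℝ)/2 * (poch ((k:ℝ) - ↑m - 1) (2*m+3) / ((↑m+1)*(↑m+2)))
    = poch ((k:ℝ) - ↑(m+2) + 1) (2*(m+2)) / ((↑m+1)*(↑m+2))
      + (2*(m:ℝ)+3)/(2*((m:ℝ)+1)) * poch ((k:ℝ) - ↑m + 1 - 1) (2*m+2) := by
  have hm1 : ((m:ℝ)+1) ≠ 0 := by positivity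
  have hm2 : ((m:ℝ)+2) ≠ 0 := by positivity
  rw [show ((k:ℝ) + 1 - ↑m - 1) = ((k:ℝ) - ↑m + 1) - 1 from by ring]
  rw [show ((k:ℝ) - ↑m - 1) = ((k:ℝ) - ↑m + 1) - 2 from by ring]
  rw [show ((k:ℝ) - ↑(m+2) + 1) = ((k:ℝ) - ↑m + 1) - 2 from by push_cast; ring]
  rw [show ((k:ℝ) - ↑m + 1 - 1) = ((k:ℝ) - ↑m + 1) - 1 from by ring]
  rw [show 2*(m+2) = 2*m+4 from by omega]
  rw [subB3, subC3, subC4, subB2]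
  push_cast
  field_simp
  ring

lemma keyII (j m : ℕ) :
    (((j:ℝ)+3)/2 * (poch ((j:ℝ) + 1 + 2 - ↑m - 1) (2*m+3) / ((↑m+1)*(↑m+2)))
        - ((j:ℝ)+2)/2 * (poch ((j:ℝ) + 1 + 1 - ↑m - 1) (2*m+3) / ((↑m+1)*(↑m+2)))) / (2*((j:ℝ)+1)+3)
      - (((j:ℝ)+1)/2 * (poch ((j:ℝ) + 1 - ↑m - 1) (2*m+3) / ((↑m+1)*(↑m+2)))
        - (j:ℝ)/2 * (poch ((j:ℝ) - ↑m - 1) (2*m+3) / ((↑m+1)*(↑m+2)))) / (2*((j:ℝ)+1)-1)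
    = (2*((j:ℝ)+1)+1) * poch ((j:ℝ) + 1 - ↑m + 1) (2*m) := by
  have hm1 : ((m:ℝ)+1) ≠ 0 := by positivity
  have hm2 : ((m:ℝ)+2) ≠ 0 := by positivity
  have hj : (0:ℝ) ≤ (j:ℝ) := Nat.cast_nonneg j
  have hd1 : (2*((j:ℝ)+1)+3) ≠ 0 := by positivity
  have hd2 : (2*((j:ℝ)+1)-1) ≠ 0 := by intro h; nlinarith
  rw [show ((j:ℝ) + 1 + 2 - ↑m - 1) = ((j:ℝ) - ↑m + 2) from by ring]
  rw [show ((j:ℝ) + 1 + 1 - ↑m - 1) = ((j:ℝ) - ↑m + 2) - 1 from by ring]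
  rw [show ((j:ℝ) + 1 - ↑m - 1) = ((j:ℝ) - ↑m + 2) - 2 from by ring]
  rw [show ((j:ℝ) - ↑m - 1) = ((j:ℝ) - ↑m + 2) - 3 from by ring]
  rw [show ((j:ℝ) + 1 - ↑m + 1) = ((j:ℝ) - ↑m + 2) from by ring]
  rw [upA3, subB3, subC3, sub3]
  push_cast
  field_simp
  ring

noncomputable def gg (p k m : ℕ) : ℝ :=
  cc p m * ((2*(m:ℝ)+3)/(2*((m:ℝ)+1)) * poch ((k:ℝ) - ↑m + 1 - 1) (2*m+2))

lemma gg_succ (p k m : ℕ) :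
    cc p (m+1) * (2*(m:ℝ)+5) / (2*((m:ℝ)+2)) * poch ((k:ℝ) - ↑(m+2) + 1) (2*(m+2))
      = gg p k (m+1) := by
  unfold gg
  rw [show ((k:ℝ) - ↑(m+1) + 1 - 1) = ((k:ℝ) - ↑(m+2) + 1) from by push_cast; ring,
      show 2*(m+1)+2 = 2*(m+2) from by omega,
      show ((m+1:ℕ):ℝ) = (m:ℝ)+1 from by push_cast; ring]
  ring

lemma baseI (p k : ℕ) :
    ∑ m ∈ Finset.range (p+3), cc (p+2) m * poch ((k:ℝ) - ↑m + 1) (2*m)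
    = ((k:ℝ)+1)/2 * ∑ m ∈ Finset.range (p+1),
        cc p m * poch ((k:ℝ)+1 - ↑m - 1) (2*m+3) / ((↑m+1)*(↑m+2))
      + (k:ℝ)/2 * ∑ m ∈ Finset.range (p+1),
        cc p m * poch ((k:ℝ) - ↑m - 1) (2*m+3) / ((↑m+1)*(↑m+2)) := by
  have hGp : gg p k (p+1) = 0 := by unfold gg; rw [cc_of_gt (by omega)]; ring
  have hshift : ∑ m ∈ Finset.range (p+1), gg p k (m+1)
      = (∑ m ∈ Finset.range (p+1), gg p k m) - gg p k 0 := by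
    have a1 := Finset.sum_range_succ' (gg p k) (p+1)
    have a2 := Finset.sum_range_succ (gg p k) (p+1)
    rw [a2, hGp, add_zero] at a1
    linarith [a1]
  have hF1 : ∑ m ∈ Finset.range (p+3), cc (p+2) m * poch ((k:ℝ) - ↑m + 1) (2*m)
      = ∑ m ∈ Finset.range (p+1), cc (p+2) (m+2) * poch ((k:ℝ) - ↑(m+2) + 1) (2*(m+2))
        + cc (p+2) 1 * poch ((k:ℝ) - ((1:ℕ):ℝ) + 1) (2*1)
        + cc (p+2) 0 * poch ((k:ℝ) - ((0:ℕ):ℝ) + 1) (2*0) := by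
    rw [Finset.sum_range_succ', Finset.sum_range_succ']
  have hone : cc (p+2) 1 * poch ((k:ℝ) - ((1:ℕ):ℝ) + 1) (2*1) = gg p k 0 := by
    rw [cc_one]; unfold gg; norm_num; ring
  have hmid : ∑ m ∈ Finset.range (p+1), cc (p+2) (m+2) * poch ((k:ℝ) - ↑(m+2) + 1) (2*(m+2))
      = ∑ m ∈ Finset.range (p+1),
          (cc p m * (poch ((k:ℝ) - ↑(m+2) + 1) (2*(m+2)) / ((↑m+1)*(↑m+2))) + gg p k (m+1)) := by
    refine Finset.sum_congr rfl fun m _ => ?_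
    rw [cLem, ← gg_succ]
    ring
  have hfin : (∑ m ∈ Finset.range (p+1),
        cc p m * (poch ((k:ℝ) - ↑(m+2) + 1) (2*(m+2)) / ((↑m+1)*(↑m+2))))
      + (∑ m ∈ Finset.range (p+1), gg p k m)
      = ((k:ℝ)+1)/2 * ∑ m ∈ Finset.range (p+1),
          cc p m * poch ((k:ℝ)+1 - ↑m - 1) (2*m+3) / ((↑m+1)*(↑m+2))
        + (k:ℝ)/2 * ∑ m ∈ Finset.range (p+1),
          cc p m * poch ((k:ℝ) - ↑m - 1) (2*m+3) / ((↑m+1)*(↑m+2)) := by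
    rw [← Finset.sum_add_distrib, Finset.mul_sum, Finset.mul_sum, ← Finset.sum_add_distrib]
    refine Finset.sum_congr rfl fun m _ => ?_
    unfold gg
    linear_combination (cc p m) * (keyI k m).symm
  rw [hF1, cc_zero, hone, hmid, Finset.sum_add_distrib, hshift]
  linear_combination hfin

lemma baseII (p j : ℕ) :
    (((j:ℝ)+1+2)/2 * ∑ m ∈ Finset.range (p+1),
        cc p m * poch ((j:ℝ)+1+2 - ↑m - 1) (2*m+3) / ((↑m+1)*(↑m+2))
      - ((j:ℝ)+1+1)/2 * ∑ m ∈ Finset.range (p+1),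
        cc p m * poch ((j:ℝ)+1+1 - ↑m - 1) (2*m+3) / ((↑m+1)*(↑m+2))) / (2*((j:ℝ)+1)+3)
    - (((j:ℝ)+1)/2 * ∑ m ∈ Finset.range (p+1),
        cc p m * poch ((j:ℝ)+1 - ↑m - 1) (2*m+3) / ((↑m+1)*(↑m+2))
      - (j:ℝ)/2 * ∑ m ∈ Finset.range (p+1),
        cc p m * poch ((j:ℝ) - ↑m - 1) (2*m+3) / ((↑m+1)*(↑m+2))) / (2*((j:ℝ)+1)-1)
    = (2*((j:ℝ)+1)+1) * ∑ m ∈ Finset.range (p+1),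
        cc p m * poch ((j:ℝ)+1 - ↑m + 1) (2*m) := by
  rw [Finset.mul_sum, Finset.mul_sum, Finset.mul_sum, Finset.mul_sum, Finset.mul_sum,
    ← Finset.sum_sub_distrib, ← Finset.sum_sub_distrib, Finset.sum_div, Finset.sum_div,
    ← Finset.sum_sub_distrib]
  refine Finset.sum_congr rfl fun m _ => ?_
  linear_combination (cc p m) * keyII j m

/-- The coefficients
`a_k^{(p)} = (-1)^k (k/2) ∑_{m=0}^{p} c_m^{(p)} (k-m-1)_{2m+3} / ((m+1)(m+2))`. -/
noncomputable def aCoeff (p k : ℕ) : ℝ :=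
  (-1 : ℝ) ^ k * ((k : ℝ) / 2) *
    ∑ m ∈ Finset.range (p + 1),
      cc p m * poch ((k : ℝ) - m - 1) (2 * m + 3) / (((m : ℝ) + 1) * ((m : ℝ) + 2))

/-- The choices (21) give the coefficients `f_k^{(p)}` of (23) and `g_k^{(p)}` of (24). -/
theorem aCoeff_f_and_g (p k : ℕ) :
    (2 * (k : ℝ) + 1) * (aCoeff p (k + 1) - aCoeff p k) =
        (-1 : ℝ) ^ (k + 1) * (2 * (k : ℝ) + 1) *
          ∑ m ∈ Finset.range (p + 3), cc (p + 2) m * poch ((k : ℝ) - m + 1) (2 * m) ∧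
      (1 ≤ k →
        (aCoeff p (k + 2) + aCoeff p (k + 1)) / (2 * (k : ℝ) + 3) -
            (aCoeff p k + aCoeff p (k - 1)) / (2 * (k : ℝ) - 1) =
          (-1 : ℝ) ^ k * (2 * (k : ℝ) + 1) *
            ∑ m ∈ Finset.range (p + 1), cc p m * poch ((k : ℝ) - m + 1) (2 * m)) := by
  constructor
  · simp only [aCoeff]
    push_cast
    linear_combination (2*(k:ℝ)+1) * (-1:ℝ)^k * baseI p k
  · intro hk
    obtain ⟨j, rfl⟩ : ∃ j, k = j + 1 := ⟨k - 1, by omega⟩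
    simp only [aCoeff, Nat.add_sub_cancel]
    push_cast
    linear_combination ((-1:ℝ))^(j+1) * baseII p j
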